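/- arXiv:2302.06165 — 4 statements merged into one kernel-verified Lean document; each statement's English description precedes it below -/
import Mathlib

section
/- Let V be a k-dimensional subspace of ℝ^d and let ℓ ≥ 1 be a real number. Then there exists a set S ⊆ {1,...,d} of coordinates with |S| ≤ k·ℓ such that for every unit vector v ∈ V and every coordinate i ∉ S, we have |v_i| < 1/√ℓ. -/
/-! The leverage scores `‖P_V eᵢ‖²` of the coordinate vectors sum to `trace P_V = k`, so by
Markov at most `k ℓ` of them reach `1 / ℓ`. For every other coordinate and unit `v ∈ V`,
`|vᵢ| = |⟪P_V eᵢ, v⟫| ≤ ‖P_V eᵢ‖ < 1 / √ℓ`. -/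

open Finset RCLike
open scoped InnerProductSpace

theorem Finset.card_filter_le_nsmul_le_sum {ι M : Type*} [AddCommMonoid M] [PartialOrder M]
    [IsOrderedAddMonoid M] [DecidableLE M] (s : Finset ι) (f : ι → M) (hf : ∀ i ∈ s, 0 ≤ f i)
    (t : M) :
    #{i ∈ s | t ≤ f i} • t ≤ ∑ i ∈ s, f i :=
  calc #{i ∈ s | t ≤ f i} • t ≤ ∑ i ∈ s with t ≤ f i, f i :=
        card_nsmul_le_sum _ _ _ fun _ hi ↦ (mem_filter.mp hi).2
    _ ≤ ∑ i ∈ s, f i :=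
        sum_le_sum_of_subset_of_nonneg (filter_subset _ _) fun i hi _ ↦ hf i hi

section starProjection

variable {𝕜 E : Type*} [RCLike 𝕜] [NormedAddCommGroup E] [InnerProductSpace 𝕜 E]

theorem Submodule.norm_inner_le_norm_starProjection_mul_norm (K : Submodule 𝕜 E)
    [K.HasOrthogonalProjection] (x : E) {v : E} (hv : v ∈ K) :
    ‖⟪x, v⟫_𝕜‖ ≤ ‖K.starProjection x‖ * ‖v‖ := by
  rw [← K.starProjection_eq_self_iff.mpr hv, ← K.inner_starProjection_left_eq_right,
    K.starProjection_eq_self_iff.mpr hv]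
  exact norm_inner_le_norm _ _

theorem Submodule.sum_norm_sq_starProjection_eq_finrank {ι : Type*} [Fintype ι]
    [FiniteDimensional 𝕜 E] (K : Submodule 𝕜 E) (b : OrthonormalBasis ι 𝕜 E) :
    ∑ i, ‖K.starProjection (b i)‖ ^ 2 = Module.finrank 𝕜 K := by
  have hproj : LinearMap.IsProj K (K.starProjection : E →ₗ[𝕜] E) :=
    ⟨K.starProjection_apply_mem, fun x hx ↦ K.starProjection_eq_self_iff.mpr hx⟩
  have htrace := (LinearMap.trace_eq_sum_inner _ b).symm.trans hproj.trace
  apply_fun re at htrace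
  rw [map_sum, natCast_re] at htrace
  simp only [ContinuousLinearMap.coe_coe] at htrace
  rw [← htrace]
  congr 1 with i
  rw [← inner_conj_symm, conj_re, K.re_inner_starProjection_eq_normSq, starProjection_apply,
    Submodule.norm_coe]

end starProjection

theorem stmt0 (d k : ℕ) (V : Submodule ℝ (EuclideanSpace ℝ (Fin d)))
    (hV : Module.finrank ℝ V = k) (ℓ : ℝ) (hℓ : 1 ≤ ℓ) :
    ∃ S : Finset (Fin d), (S.card : ℝ) ≤ k * ℓ ∧
      ∀ v ∈ V, ‖v‖ = 1 → ∀ i ∉ S, |v i| < 1 / Real.sqrt ℓ := by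
  have hℓ_pos : 0 < ℓ := by linarith
  let e := EuclideanSpace.basisFun (Fin d) ℝ
  refine ⟨({i | ℓ⁻¹ ≤ ‖V.starProjection (e i)‖ ^ 2} : Finset _), ?_, ?_⟩
  · have hcount := univ.card_filter_le_nsmul_le_sum (fun i ↦ ‖V.starProjection (e i)‖ ^ 2)
      (fun _ _ ↦ by positivity) ℓ⁻¹
    rw [V.sum_norm_sq_starProjection_eq_finrank, hV, nsmul_eq_mul] at hcount
    rwa [← le_div_iff₀ (inv_pos.mpr hℓ_pos), div_inv_eq_mul] at hcount
  · intro v hv hv_norm i hi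
    have hsmall : ‖V.starProjection (e i)‖ < 1 / √ℓ := by
      rw [one_div, ← Real.sqrt_inv, Real.lt_sqrt (norm_nonneg _)]
      simpa using hi
    calc |v i| = ‖⟪e i, v⟫_ℝ‖ := by rw [EuclideanSpace.basisFun_inner, Real.norm_eq_abs]
      _ ≤ ‖V.starProjection (e i)‖ * ‖v‖ := V.norm_inner_le_norm_starProjection_mul_norm _ hv
      _ < 1 / √ℓ := by rwa [hv_norm, mul_one]
end

section
/- Let v ∈ ℝ^m be a vector with at most s ≤ m/2 nonzero entries, and let t ≤ s/8 be a positive integer. Then there exist at least min{ C(m−1, t−1), (s/(8t))^t } subsets T ⊆ {1,...,m} of cardinality t such that Σ_{i∈T} v_i² ≥ t‖v‖²/(2s). -/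
/-!
Put `u = ‖v‖² / (2s)`, so that the threshold is `t u`. If some `v i ^ 2 ≥ t u`, every `t`-set
containing `i` qualifies, which gives `C(m - 1, t - 1)` sets. Otherwise the entries below `u` carry
at most `s u = ‖v‖² / 2` (at most `s` of them are nonzero), and the remaining mass is spread over
the dyadic bands `2 ^ j u ≤ v i ^ 2 < 2 ^ (j + 1) u` with `2 ^ j ≤ x := s / (8t)` and the top part
`v i ^ 2 ≥ 2 ^ b u` with `2 ^ b > x`. Either some band carries `‖v‖² / 2 ^ (j + 2)`, hence has
`ℓ ≥ s / (4 · 4 ^ j)` elements, or the top part carries `2 t u`. With `c = ⌈t / 2 ^ j⌉` (resp.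
`⌈t / 2 ^ b⌉`), any `c` elements of that part (or the whole top part, if it has fewer) reach the
threshold, and completing them by `t - c` coordinates outside it yields
`C(ℓ, c) · C(m - ℓ, t - c) ≥ x ^ t` sets, by `(n / k) ^ k ≤ C(n, k)` and `(j + 3) c ≤ 3t`.
-/

open Finset

theorem Nat.pow_le_pow_mul_choose {n k : ℕ} (hkn : k ≤ n) : n ^ k ≤ k ^ k * n.choose k := by
  have hprod : ∏ i ∈ range k, (n * (k - i)) ≤ ∏ i ∈ range k, (k * (n - i)) :=
    prod_le_prod' fun i hi => by
      have hik : i ≤ k := (mem_range.1 hi).le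
      zify [hik, hik.trans hkn]
      nlinarith
  simp only [prod_mul_distrib, prod_const, card_range, ← Nat.descFactorial_eq_prod_range,
    Nat.descFactorial_self, Nat.descFactorial_eq_factorial_mul_choose] at hprod
  rw [mul_comm, mul_left_comm] at hprod
  exact Nat.le_of_mul_le_mul_left hprod k.factorial_pos

theorem div_pow_le_choose {n k : ℕ} (hkn : k ≤ n) : ((n : ℝ) / k) ^ k ≤ n.choose k := by
  rcases k.eq_zero_or_pos with rfl | hk
  · simp
  rw [div_pow, div_le_iff₀ (by positivity), mul_comm]
  exact_mod_cast Nat.pow_le_pow_mul_choose hkn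

theorem pow_le_choose_of_mul_le {y : ℝ} {n k : ℕ} (hy : 0 ≤ y) (hkn : k ≤ n) (h : y * k ≤ n) :
    y ^ k ≤ n.choose k := by
  rcases k.eq_zero_or_pos with rfl | hk
  · simp
  exact (pow_le_pow_left₀ hy ((le_div_iff₀ (by positivity)).2 h) k).trans (div_pow_le_choose hkn)

theorem Finset.choose_mul_choose_le_card_filter_powersetCard {α : Type*} [Fintype α]
    {p : Finset α → Prop} [DecidablePred p] (hp : ∀ ⦃C T⦄, C ⊆ T → p C → p T)
    (L : Finset α) {c t : ℕ} (hct : c ≤ t) (hL : ∀ C ∈ powersetCard c L, p C) :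
    (#L).choose c * (Fintype.card α - #L).choose (t - c) ≤ #{T ∈ powersetCard t univ | p T} := by
  classical
  rw [← card_powersetCard, ← card_compl, ← card_powersetCard, ← card_product]
  refine card_le_card_of_injOn (fun q => q.1 ∪ q.2) ?_ ?_
  · rintro ⟨C, F⟩ hCF
    simp only [coe_product, Set.mem_prod, mem_coe, mem_powersetCard] at hCF
    obtain ⟨⟨hCL, hC⟩, hFL, hF⟩ := hCF
    have hdisj : Disjoint C F := disjoint_compl_right.mono hCL hFL
    simp only [coe_filter, Set.mem_ofPred_eq, mem_powersetCard, subset_univ, true_and,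
      card_union_of_disjoint hdisj]
    exact ⟨by omega, hp subset_union_left (hL C (mem_powersetCard.2 ⟨hCL, hC⟩))⟩
  · rintro ⟨C₁, F₁⟩ h₁ ⟨C₂, F₂⟩ h₂ (heq : C₁ ∪ F₁ = C₂ ∪ F₂)
    simp only [coe_product, Set.mem_prod, mem_coe, mem_powersetCard] at h₁ h₂
    have split : ∀ C F : Finset α, C ⊆ L → F ⊆ Lᶜ → (C ∪ F) ∩ L = C ∧ (C ∪ F) \ L = F := by
      intro C F hC hF
      have hFL : Disjoint F L := disjoint_compl_right.symm.mono_left hF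
      rw [union_inter_distrib_right, inter_eq_left.2 hC, disjoint_iff_inter_eq_empty.1 hFL, union_empty,
        union_sdiff_distrib, sdiff_eq_empty_iff_subset.2 hC, hFL.sdiff_eq_left, empty_union]
      exact ⟨rfl, rfl⟩
    obtain ⟨hC₁, hF₁⟩ := split C₁ F₁ h₁.1.1 h₁.2.1
    obtain ⟨hC₂, hF₂⟩ := split C₂ F₂ h₂.1.1 h₂.2.1
    rw [heq] at hC₁ hF₁
    exact Prod.ext (hC₁.symm.trans hC₂) (hF₁.symm.trans hF₂)

theorem Finset.sum_filter_le_eq_sum_range_add {ι β M : Type*} [LinearOrder β] [AddCommMonoid M]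
    (S : Finset ι) (a : ι → β) (g : ι → M) {y : ℕ → β} (hy : Monotone y) (n : ℕ) :
    ∑ i ∈ S with y 0 ≤ a i, g i =
      ∑ j ∈ range n, ∑ i ∈ S with y j ≤ a i ∧ a i < y (j + 1), g i +
        ∑ i ∈ S with y n ≤ a i, g i := by
  induction n with
  | zero => simp
  | succ n ih =>
    rw [ih, sum_range_succ, add_assoc,
      ← sum_filter_add_sum_filter_not {i ∈ S | y n ≤ a i} (fun i => a i < y (n + 1)),
      filter_filter, filter_filter]
    congr 3
    ext i
    simp only [mem_filter, not_lt]
    exact and_congr_right fun _ => ⟨And.right, fun h => ⟨(hy n.le_succ).trans h, h⟩⟩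

theorem sum_range_inv_two_pow_succ (n : ℕ) :
    ∑ j ∈ range n, ((2 : ℝ) ^ (j + 1))⁻¹ = 1 - ((2 : ℝ) ^ n)⁻¹ := by
  induction n with
  | zero => simp
  | succ n ih =>
    rw [sum_range_succ, ih, pow_succ]
    field_simp
    ring

theorem pow_le_div_pow_mul_pow {x P r : ℝ} {c t : ℕ} (hx : 0 ≤ x) (hP : 0 < P) (hct : c ≤ t)
    (h : P ^ c ≤ r ^ (t - c)) : x ^ t ≤ (x / P) ^ c * (r * x) ^ (t - c) :=
  calc x ^ t = (x / P) ^ c * P ^ c * x ^ (t - c) := by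
        rw [div_pow, div_mul_cancel₀ _ (pow_ne_zero _ hP.ne'), ← pow_add, Nat.add_sub_cancel' hct]
    _ ≤ (x / P) ^ c * r ^ (t - c) * x ^ (t - c) := by gcongr
    _ = (x / P) ^ c * (r * x) ^ (t - c) := by rw [mul_pow, mul_assoc]

namespace Nat

theorem ceilDiv_le_self {t d : ℕ} (hd : 0 < d) : t ⌈/⌉ d ≤ t :=
  (ceilDiv_le_iff_le_mul hd).2 (Nat.le_mul_of_pos_left t hd)

theorem mul_ceilDiv_le_two_mul {t d : ℕ} (hdt : d ≤ t) : d * (t ⌈/⌉ d) ≤ 2 * t := by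
  have := Nat.mul_div_le (t + d - 1) d
  rw [ceilDiv_eq_add_pred_div]
  omega

theorem add_three_mul_ceilDiv_two_pow_le {j t : ℕ} (hjt : 2 ^ j < t) :
    (j + 3) * (t ⌈/⌉ 2 ^ j) ≤ 3 * t := by
  set c := t ⌈/⌉ 2 ^ j
  have hc : 2 ^ j * c ≤ t + 2 ^ j - 1 := Nat.mul_div_le _ _
  match j with
  | 0 => simp only [pow_zero, one_mul] at hc; omega
  | 1 => simp only [pow_one] at hc hjt; omega
  | i + 2 =>
    have hi : i < 2 ^ i := Nat.lt_two_pow_self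
    have h4 : 2 ^ (i + 2) = 4 * 2 ^ i := by rw [pow_add]; ring
    have hpow : 2 * (i + 2 + 3) ≤ 3 * 2 ^ (i + 2) := by omega
    refine Nat.le_of_mul_le_mul_left ?_ (Nat.two_pow_pos (i + 2))
    calc 2 ^ (i + 2) * ((i + 2 + 3) * c) = (i + 2 + 3) * (2 ^ (i + 2) * c) := by ring
      _ ≤ (i + 2 + 3) * (2 * t) := Nat.mul_le_mul_left _ (by omega)
      _ = 2 * (i + 2 + 3) * t := by ring
      _ ≤ 3 * 2 ^ (i + 2) * t := Nat.mul_le_mul_right _ hpow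
      _ = 2 ^ (i + 2) * (3 * t) := by ring

end Nat

theorem two_pow_pow_ceilDiv_le {j t : ℕ} (hjt : 2 ^ j < t) :
    ((2 : ℝ) ^ j) ^ (t ⌈/⌉ 2 ^ j) ≤ 8 ^ (t - t ⌈/⌉ 2 ^ j) := by
  have h := Nat.add_three_mul_ceilDiv_two_pow_le hjt
  rw [add_mul] at h
  rw [← pow_mul, show (8 : ℝ) = 2 ^ 3 by norm_num, ← pow_mul]
  exact pow_le_pow_right₀ one_le_two (by rw [Nat.mul_sub]; omega)

section HeavySubsets

variable {α : Type*} {a : α → ℝ} {s t : ℕ} {u τ : ℝ}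

theorem le_sum_of_mem_powersetCard {L : Finset α} {c : ℕ} {y : ℝ} (hy : ∀ i ∈ L, y ≤ a i)
    (hτ : τ ≤ c * y) : ∀ C ∈ powersetCard c L, τ ≤ ∑ i ∈ C, a i := by
  intro C hC
  rw [mem_powersetCard] at hC
  calc τ ≤ c * y := hτ
    _ = #C • y := by rw [hC.2, nsmul_eq_mul]
    _ ≤ ∑ i ∈ C, a i := card_nsmul_le_sum C a y fun i hi => hy i (hC.1 hi)

variable [Fintype α]

noncomputable def heavySubsets (a : α → ℝ) (τ : ℝ) (t : ℕ) : Finset (Finset α) :=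
  {T ∈ powersetCard t univ | τ ≤ ∑ i ∈ T, a i}

theorem choose_mul_choose_le_card_heavySubsets (ha : ∀ i, 0 ≤ a i) (L : Finset α) {c : ℕ}
    (hct : c ≤ t) (hL : ∀ C ∈ powersetCard c L, τ ≤ ∑ i ∈ C, a i) :
    (#L).choose c * (Fintype.card α - #L).choose (t - c) ≤ #(heavySubsets a τ t) :=
  choose_mul_choose_le_card_filter_powersetCard
    (fun _ _ hCT h => h.trans (sum_le_sum_of_subset_of_nonneg hCT fun i _ _ => ha i)) L hct hL

theorem sum_filter_lt_le_mul (hsupp : #{i | a i ≠ 0} ≤ s) (hu : 0 ≤ u) :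
    ∑ i with a i < u, a i ≤ s * u := by
  rw [← sum_filter_ne_zero, filter_filter]
  calc ∑ i with a i < u ∧ a i ≠ 0, a i ≤ #{i | a i < u ∧ a i ≠ 0} • u :=
        sum_le_card_nsmul _ _ _ fun i hi => (mem_filter.1 hi).2.1.le
    _ ≤ s * u := by
        rw [nsmul_eq_mul]
        gcongr
        exact_mod_cast (card_le_card <|
          monotone_filter_right univ fun i _ (h : a i < u ∧ a i ≠ 0) => h.2).trans hsupp

theorem card_filter_le_apply_le (hsupp : #{i | a i ≠ 0} ≤ s) {y : ℝ} (hy : 0 < y) :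
    #{i | y ≤ a i} ≤ s :=
  (card_le_card (monotone_filter_right _ fun _ _ h => (hy.trans_le h).ne')).trans hsupp

theorem div_pow_le_choose_sub {n ℓ q : ℕ} (hsn : 2 * s ≤ n) (hℓ : ℓ ≤ s) (ht : 0 < t)
    (hts : t ≤ s) (hq : q ≤ t) : ((s : ℝ) / t) ^ q ≤ (n - ℓ).choose q := by
  have hsnℓ : (s : ℝ) ≤ (n - ℓ : ℕ) := by exact_mod_cast (by omega : s ≤ n - ℓ)
  refine pow_le_choose_of_mul_le (by positivity) (by omega) ?_
  calc (s : ℝ) / t * q ≤ s / t * t := by gcongr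
    _ = s := div_mul_cancel₀ _ (by positivity)
    _ ≤ (n - ℓ : ℕ) := hsnℓ

theorem pow_le_card_heavySubsets_of_band (ha : ∀ i, 0 ≤ a i) (hsupp : #{i | a i ≠ 0} ≤ s)
    (hsm : 2 * s ≤ Fintype.card α) (ht : 0 < t) (hts : 8 * t ≤ s) (hu : 0 < u)
    (hlight : ∀ i, a i < t * u) {j : ℕ} (hj : (2 : ℝ) ^ j ≤ s / (8 * t))
    (hmass : s * u ≤ 2 ^ (j + 1) * ∑ i with 2 ^ j * u ≤ a i ∧ a i < 2 ^ (j + 1) * u, a i) :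
    ((s : ℝ) / (8 * t)) ^ t ≤ #(heavySubsets a (t * u) t) := by
  set x : ℝ := s / (8 * t) with hx
  set L : Finset α := {i | 2 ^ j * u ≤ a i ∧ a i < 2 ^ (j + 1) * u}
  set c := t ⌈/⌉ 2 ^ j
  have hs : (0 : ℝ) < s := by exact_mod_cast (by omega : 0 < s)
  have hxs : 8 * x * t = s := by rw [hx]; field_simp
  have hLs : #L ≤ s := (card_le_card (monotone_filter_right _ fun _ _ h => h.1)).trans
    (card_filter_le_apply_le hsupp (by positivity))
  have hjt : 2 ^ j < t := by
    obtain ⟨i, hi⟩ : L.Nonempty := nonempty_of_sum_ne_zero (by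
      have : 0 < 2 ^ (j + 1) * ∑ i ∈ L, a i := (by positivity : (0 : ℝ) < s * u).trans_le hmass
      exact (pos_of_mul_pos_right this (by positivity)).ne')
    exact_mod_cast lt_of_mul_lt_mul_right ((mem_filter.1 hi).2.1.trans_lt (hlight i)) hu.le
  have hsL : (s : ℝ) ≤ 4 * (2 ^ j) ^ 2 * #L := by
    have hbound : ∑ i ∈ L, a i ≤ #L • (2 ^ (j + 1) * u) :=
      sum_le_card_nsmul L a _ fun i hi => (mem_filter.1 hi).2.2.le
    rw [nsmul_eq_mul] at hbound
    refine le_of_mul_le_mul_right ?_ hu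
    calc (s : ℝ) * u ≤ 2 ^ (j + 1) * ∑ i ∈ L, a i := hmass
      _ ≤ 2 ^ (j + 1) * (#L * (2 ^ (j + 1) * u)) := by gcongr
      _ = 4 * (2 ^ j) ^ 2 * #L * u := by ring
  have htc : (t : ℝ) ≤ 2 ^ j * c := by exact_mod_cast le_smul_ceilDiv (Nat.two_pow_pos j)
  have hct : (2 : ℝ) ^ j * c ≤ 2 * t := by exact_mod_cast Nat.mul_ceilDiv_le_two_mul hjt.le
  have hcount := choose_mul_choose_le_card_heavySubsets ha L
    (Nat.ceilDiv_le_self (Nat.two_pow_pos j))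
    (le_sum_of_mem_powersetCard (τ := t * u) (y := 2 ^ j * u) (fun i hi => (mem_filter.1 hi).2.1)
      (by rw [← mul_assoc, mul_comm (c : ℝ)]; gcongr))
  have hxc : x / 2 ^ j * c ≤ #L := by
    rw [div_mul_eq_mul_div, div_le_iff₀ (by positivity)]
    refine le_of_mul_le_mul_left ?_ (by positivity : (0 : ℝ) < 4 * 2 ^ j)
    calc 4 * 2 ^ j * (x * c) = 4 * x * (2 ^ j * c) := by ring
      _ ≤ 4 * x * (2 * t) := by gcongr
      _ = s := by rw [← hxs]; ring
      _ ≤ 4 * (2 ^ j) ^ 2 * #L := hsL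
      _ = 4 * 2 ^ j * (#L * 2 ^ j) := by ring
  have hcL : c ≤ #L := by
    have : (c : ℝ) ≤ x / 2 ^ j * c :=
      le_mul_of_one_le_left (by positivity) ((one_le_div (by positivity)).2 hj)
    exact_mod_cast this.trans hxc
  calc x ^ t ≤ (x / 2 ^ j) ^ c * (8 * x) ^ (t - c) :=
        pow_le_div_pow_mul_pow (by positivity) (by positivity)
          (Nat.ceilDiv_le_self (Nat.two_pow_pos j)) (two_pow_pow_ceilDiv_le hjt)
    _ ≤ (#L).choose c * (Fintype.card α - #L).choose (t - c) := by
        gcongr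
        · exact pow_le_choose_of_mul_le (by positivity) hcL hxc
        · rw [show 8 * x = s / t by rw [← hxs]; field_simp]
          exact div_pow_le_choose_sub hsm hLs ht (by omega) (Nat.sub_le t c)
    _ ≤ #(heavySubsets a (t * u) t) := by exact_mod_cast hcount

theorem pow_le_card_heavySubsets_of_top (ha : ∀ i, 0 ≤ a i) (hsupp : #{i | a i ≠ 0} ≤ s)
    (hsm : 2 * s ≤ Fintype.card α) (ht : 0 < t) (hts : 8 * t ≤ s) (hu : 0 < u)
    (hlight : ∀ i, a i < t * u) {b : ℕ} (hb : (s : ℝ) / (8 * t) < 2 ^ b)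
    (hmass : 2 * t * u ≤ ∑ i with 2 ^ b * u ≤ a i, a i) :
    ((s : ℝ) / (8 * t)) ^ t ≤ #(heavySubsets a (t * u) t) := by
  set x : ℝ := s / (8 * t) with hx
  set H : Finset α := {i | 2 ^ b * u ≤ a i}
  set c := t ⌈/⌉ 2 ^ b
  set p := min c #H
  have hHs : #H ≤ s := card_filter_le_apply_le hsupp (by positivity)
  have hbt : 2 ^ b < t := by
    obtain ⟨i, hi⟩ : H.Nonempty := nonempty_of_sum_ne_zero
      ((by positivity : (0 : ℝ) < 2 * t * u).trans_le hmass).ne'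
    exact_mod_cast lt_of_mul_lt_mul_right ((mem_filter.1 hi).2.trans_lt (hlight i)) hu.le
  have hx1 : 1 ≤ x := (one_le_div (by positivity)).2 (by exact_mod_cast hts)
  have hpt : p ≤ t := (min_le_left _ _).trans (Nat.ceilDiv_le_self (Nat.two_pow_pos b))
  have hcores : ∀ C ∈ powersetCard p H, t * u ≤ ∑ i ∈ C, a i := by
    rcases le_total c #H with hcH | hHc
    · rw [show p = c from min_eq_left hcH]
      refine le_sum_of_mem_powersetCard (y := 2 ^ b * u) (fun i hi => (mem_filter.1 hi).2) ?_
      rw [← mul_assoc, mul_comm (c : ℝ)]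
      gcongr
      exact_mod_cast le_smul_ceilDiv (Nat.two_pow_pos b)
    · rw [show p = #H from min_eq_right hHc]
      intro C hC
      rw [mem_powersetCard] at hC
      rw [eq_of_subset_of_card_le hC.1 hC.2.ge]
      linarith [mul_pos (by positivity : (0 : ℝ) < t) hu]
  have hcount := choose_mul_choose_le_card_heavySubsets ha H hpt hcores
  have hxp : x ^ p ≤ 8 ^ (t - p) :=
    calc x ^ p ≤ x ^ c := pow_le_pow_right₀ hx1 (min_le_left _ _)
      _ ≤ ((2 : ℝ) ^ b) ^ c := pow_le_pow_left₀ (by positivity) hb.le c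
      _ ≤ 8 ^ (t - c) := two_pow_pow_ceilDiv_le hbt
      _ ≤ 8 ^ (t - p) := pow_le_pow_right₀ (by norm_num) (by omega)
  calc x ^ t = x ^ p * x ^ (t - p) := by rw [← pow_add, Nat.add_sub_cancel' hpt]
    _ ≤ 8 ^ (t - p) * x ^ (t - p) := by gcongr
    _ = ((s : ℝ) / t) ^ (t - p) := by rw [← mul_pow, hx]; field_simp
    _ ≤ (Fintype.card α - #H).choose (t - p) :=
        div_pow_le_choose_sub hsm hHs ht (by omega) (Nat.sub_le t p)
    _ ≤ (#H).choose p * (Fintype.card α - #H).choose (t - p) := by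
        refine le_mul_of_one_le_left (by positivity) ?_
        exact_mod_cast Nat.choose_pos (min_le_right _ _)
    _ ≤ #(heavySubsets a (t * u) t) := by exact_mod_cast hcount

theorem pow_le_card_heavySubsets_of_forall_lt (ha : ∀ i, 0 ≤ a i) (hsupp : #{i | a i ≠ 0} ≤ s)
    (hsm : 2 * s ≤ Fintype.card α) (ht : 0 < t) (hts : 8 * t ≤ s) (hW : ∑ i, a i = 2 * s * u)
    (hlight : ∀ i, a i < t * u) :
    ((s : ℝ) / (8 * t)) ^ t ≤ #(heavySubsets a (t * u) t) := by
  set x : ℝ := s / (8 * t) with hx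
  have hu : 0 < u := by
    obtain ⟨i⟩ : Nonempty α := Fintype.card_pos_iff.1 (by omega)
    exact pos_of_mul_pos_right ((ha i).trans_lt (hlight i)) (by positivity)
  have hx1 : 1 ≤ x := (one_le_div (by positivity)).2 (by exact_mod_cast hts)
  obtain ⟨k, hk, hk'⟩ := exists_nat_pow_near hx1 one_lt_two
  have hheavy : s * u ≤ ∑ i with u ≤ a i, a i := by
    have hsplit := sum_filter_add_sum_filter_not univ (fun i => u ≤ a i) a
    simp only [not_le] at hsplit
    linarith [sum_filter_lt_le_mul hsupp hu.le]
  by_cases hband : ∃ j ≤ k,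
      s * u ≤ 2 ^ (j + 1) * ∑ i with 2 ^ j * u ≤ a i ∧ a i < 2 ^ (j + 1) * u, a i
  · obtain ⟨j, hjk, hj⟩ := hband
    exact pow_le_card_heavySubsets_of_band ha hsupp hsm ht hts hu hlight
      ((pow_le_pow_right₀ one_le_two hjk).trans hk) hj
  push Not at hband
  refine pow_le_card_heavySubsets_of_top ha hsupp hsm ht hts hu hlight hk' ?_
  have hdecomp := sum_filter_le_eq_sum_range_add univ a a (y := fun j => (2 : ℝ) ^ j * u)
    (fun _ _ hij => mul_le_mul_of_nonneg_right (pow_le_pow_right₀ one_le_two hij) hu.le) (k + 1)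
  simp only [pow_zero, one_mul] at hdecomp
  have hbands : ∑ j ∈ range (k + 1), ∑ i with 2 ^ j * u ≤ a i ∧ a i < 2 ^ (j + 1) * u, a i
      < ∑ j ∈ range (k + 1), s * u * ((2 : ℝ) ^ (j + 1))⁻¹ := by
    refine sum_lt_sum_of_nonempty nonempty_range_add_one fun j hj => ?_
    rw [← div_eq_mul_inv, lt_div_iff₀ (by positivity), mul_comm]
    exact hband j (Nat.lt_succ_iff.1 (mem_range.1 hj))
  rw [← mul_sum, sum_range_inv_two_pow_succ] at hbands
  have htop : 2 * t * u ≤ s * u * ((2 : ℝ) ^ (k + 1))⁻¹ := by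
    rw [← div_eq_mul_inv, le_div_iff₀ (by positivity), pow_succ]
    calc 2 * t * u * (2 ^ k * 2) = 4 * t * 2 ^ k * u := by ring
      _ ≤ 8 * t * x * u := by gcongr; linarith
      _ = s * u := by rw [hx]; field_simp
  linarith

theorem min_choose_le_card_heavySubsets (ha : ∀ i, 0 ≤ a i) (hsupp : #{i | a i ≠ 0} ≤ s)
    (hsm : 2 * s ≤ Fintype.card α) (ht : 0 < t) (hts : 8 * t ≤ s) :
    min ((Fintype.card α - 1).choose (t - 1) : ℝ) (((s : ℝ) / (8 * t)) ^ t) ≤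
      #(heavySubsets a (t * (∑ i, a i) / (2 * s)) t) := by
  set u := (∑ i, a i) / (2 * s)
  rw [mul_div_assoc]
  by_cases hheavy : ∃ i, t * u ≤ a i
  · obtain ⟨i, hi⟩ := hheavy
    have hcount := choose_mul_choose_le_card_heavySubsets (c := 1) ha {i} ht
      (le_sum_of_mem_powersetCard (τ := t * u) (c := 1) (fun j hj => mem_singleton.1 hj ▸ hi)
        (by rw [Nat.cast_one, one_mul]))
    rw [card_singleton, Nat.choose_self, one_mul] at hcount
    exact (min_le_left _ _).trans (Nat.cast_le.2 hcount)
  push Not at hheavy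
  have hs : (s : ℝ) ≠ 0 := by exact_mod_cast (by omega : s ≠ 0)
  exact (min_le_right _ _).trans <| pow_le_card_heavySubsets_of_forall_lt ha hsupp hsm ht hts
    (by field_simp) hheavy

end HeavySubsets

theorem stmt6 (m s t : ℕ) (v : Fin m → ℝ)
    (hsupp : (Finset.univ.filter (fun i => v i ≠ 0)).card ≤ s)
    (hsm : (s : ℝ) ≤ m / 2) (ht : 0 < t) (hts : (t : ℝ) ≤ s / 8) :
    min (((m - 1).choose (t - 1) : ℕ) : ℝ) (((s : ℝ) / (8 * t)) ^ t) ≤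
      (((Finset.powersetCard t (Finset.univ : Finset (Fin m))).filter
        (fun T => (t : ℝ) * (∑ i, (v i) ^ 2) / (2 * s) ≤ ∑ i ∈ T, (v i) ^ 2)).card : ℝ) := by
  have hsupp' : #{i | v i ^ 2 ≠ 0} ≤ s := by simpa only [ne_eq, pow_eq_zero_iff two_ne_zero]
  have hsm' : 2 * s ≤ Fintype.card (Fin m) := by
    rw [Fintype.card_fin]
    exact_mod_cast (by linarith : (2 * s : ℝ) ≤ m)
  have hts' : 8 * t ≤ s := by exact_mod_cast (by linarith : (8 * t : ℝ) ≤ s)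
  have key := min_choose_le_card_heavySubsets (fun i => sq_nonneg (v i)) hsupp' hsm' ht hts'
  rwa [Fintype.card_fin] at key
end

section
/- Let x, y ∈ ℝ^d have disjoint supports with ‖x‖ = ‖y‖ = 1, and let A ∈ ℝ^{m×d} be a matrix such that ‖Au − Av‖² ∈ (1±ε)‖u−v‖² for u, v ranging over {0, x, y}. Then |⟨Ax, Ay⟩| ≤ 2ε. -/
theorem stmt11 (m d : ℕ) (ε : ℝ) (hε0 : 0 < ε) (hε1 : ε < 1)
    (x y : Fin d → ℝ) (hdisj : ∀ i, x i = 0 ∨ y i = 0)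
    (hx : ∑ i, (x i) ^ 2 = 1) (hy : ∑ i, (y i) ^ 2 = 1)
    (A : Matrix (Fin m) (Fin d) ℝ)
    (hA : ∀ u ∈ ({0, x, y} : Set (Fin d → ℝ)), ∀ v ∈ ({0, x, y} : Set (Fin d → ℝ)),
      |(∑ i, (A.mulVec u i - A.mulVec v i) ^ 2) - ∑ i, (u i - v i) ^ 2| ≤
        ε * ∑ i, (u i - v i) ^ 2) :
    |∑ i, A.mulVec x i * A.mulVec y i| ≤ 2 * ε := by
  have h0 : A.mulVec 0 = 0 := Matrix.mulVec_zero A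
  have hx0 := hA x (by simp) 0 (by simp)
  have hy0 := hA y (by simp) 0 (by simp)
  have hxy := hA x (by simp) y (by simp)
  rw [h0] at hx0 hy0
  simp only [Pi.zero_apply, sub_zero] at hx0 hy0
  rw [hx] at hx0
  rw [hy] at hy0
  have hxyn : ∑ i, (x i - y i) ^ 2 = 2 := by
    have he : ∀ i, (x i - y i) ^ 2 = (x i) ^ 2 + (y i) ^ 2 := by
      intro i; rcases hdisj i with h | h <;> rw [h] <;> ring
    simp_rw [he]
    rw [Finset.sum_add_distrib, hx, hy]; norm_num
  rw [hxyn] at hxy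
  have key : ∑ i, (A.mulVec x i - A.mulVec y i) ^ 2 =
      ∑ i, (A.mulVec x i) ^ 2 + ∑ i, (A.mulVec y i) ^ 2 -
        2 * ∑ i, A.mulVec x i * A.mulVec y i := by
    rw [← Finset.sum_add_distrib, Finset.mul_sum, ← Finset.sum_sub_distrib]
    exact Finset.sum_congr rfl fun i _ => by ring
  rw [key] at hxy
  rw [abs_le] at hx0 hy0 hxy ⊢
  constructor <;> linarith [hx0.1, hx0.2, hy0.1, hy0.2, hxy.1, hxy.2]
end

section
/- Let A ∈ ℝ^{m×d}, V a subspace of ℝ^d, N a 1/2-net for the unit sphere of V consisting of unit vectors, and N⁺ = {x + y : x, y ∈ N ∪ {0}}. There is an absolute constant C such that: if ‖Av‖² ∈ (1 ± ε)‖v‖² for all v ∈ N⁺ (for some ε ∈ (0,1)), then ‖Ax‖² ∈ (1 ± Cε) for every unit vector x ∈ V. -/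
/-!
The defect `B(u, v) = ⟪A u, A v⟫ - ⟪u, v⟫` is a symmetric bilinear form on `V`, so by
polarization the hypothesis on sums of net points bounds it by `3ε` on pairs of net points.
For a bounded linear map `f`, writing a unit vector as a net point plus a vector of norm at
most `1/2` gives `‖f‖ ≤ sup_N ‖f‖ + ‖f‖ / 2`, i.e. `‖f‖ ≤ 2 sup_N ‖f‖`. Applied to `B` in each
argument in turn this yields `‖B‖ ≤ 12ε`, and `|‖A x‖² - 1| = |B(x, x)| ≤ ‖B‖` for unit `x`.
-/

open scoped RealInnerProductSpace

namespace ContinuousLinearMap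

section Net

variable {E F : Type*} [NormedAddCommGroup E] [NormedSpace ℝ E]
  [NormedAddCommGroup F] [NormedSpace ℝ F] {N : Set E} {δ c : ℝ}

theorem one_sub_mul_opNorm_le_of_net (f : E →L[ℝ] F) (hδ : 0 ≤ δ) (hc : 0 ≤ c)
    (hnet : ∀ x, ‖x‖ = 1 → ∃ y ∈ N, ‖x - y‖ ≤ δ) (hN : ∀ y ∈ N, ‖f y‖ ≤ c) :
    (1 - δ) * ‖f‖ ≤ c := by
  suffices ‖f‖ ≤ c + δ * ‖f‖ by linarith
  refine opNorm_le_of_unit_norm (by positivity) fun x hx ↦ ?_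
  obtain ⟨y, hy, hxy⟩ := hnet x hx
  calc ‖f x‖ = ‖f y + f (x - y)‖ := by rw [map_sub, add_sub_cancel]
    _ ≤ ‖f y‖ + ‖f‖ * ‖x - y‖ := norm_add_le_of_le le_rfl (f.le_opNorm _)
    _ ≤ c + δ * ‖f‖ := by rw [mul_comm δ]; gcongr; exact hN y hy

theorem one_sub_sq_mul_opNorm_le_of_net₂ (B : E →L[ℝ] E →L[ℝ] ℝ) (hδ : 0 ≤ δ) (hδ₁ : δ ≤ 1)
    (hc : 0 ≤ c) (hnet : ∀ x, ‖x‖ = 1 → ∃ y ∈ N, ‖x - y‖ ≤ δ)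
    (hN : ∀ y ∈ N, ∀ y' ∈ N, |B y y'| ≤ c) : (1 - δ) ^ 2 * ‖B‖ ≤ c := by
  have hδ' : 0 ≤ 1 - δ := sub_nonneg.mpr hδ₁
  have hrow : ∀ y ∈ N, ‖((1 - δ) • B) y‖ ≤ c := fun y hy ↦ by
    rw [smul_apply, norm_smul, Real.norm_of_nonneg hδ']
    exact one_sub_mul_opNorm_le_of_net (B y) hδ hc hnet fun y' hy' ↦ hN y hy y' hy'
  have := one_sub_mul_opNorm_le_of_net _ hδ hc hnet hrow
  rwa [norm_smul, Real.norm_of_nonneg hδ', ← mul_assoc, ← sq] at this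

end Net

section Polarization

variable {E : Type*} [SeminormedAddCommGroup E] [NormedSpace ℝ E]

theorem two_mul_apply_eq_of_symm (B : E →L[ℝ] E →L[ℝ] ℝ) (hB : ∀ u v, B u v = B v u)
    (u v : E) : 2 * B u v = B (u + v) (u + v) - B u u - B v v := by
  simp only [map_add, add_apply, hB v u]
  ring

theorem abs_apply_le_of_forall_abs_apply_add_le (B : E →L[ℝ] E →L[ℝ] ℝ)
    (hB : ∀ u v, B u v = B v u) {S : Set E} {ε : ℝ} (hS : ∀ u ∈ S, ‖u‖ = 1)
    (hsum : ∀ u ∈ S, ∀ v ∈ S, |B (u + v) (u + v)| ≤ ε * ‖u + v‖ ^ 2) :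
    ∀ u ∈ S, ∀ v ∈ S, |B u v| ≤ 3 * ε := by
  have hdiag : ∀ u ∈ S, |B u u| ≤ ε := fun u hu ↦ by
    have h := hsum u hu u hu
    have hB₂ : B (u + u) (u + u) = 4 * B u u := by simp only [map_add, add_apply]; ring
    have hnorm : ‖u + u‖ = 2 := by rw [← two_smul ℝ u, norm_smul, hS u hu]; norm_num
    rw [hB₂, hnorm, abs_mul] at h
    norm_num at h
    linarith
  intro u hu v hv
  have hnorm : ‖u + v‖ ^ 2 ≤ 4 := by
    nlinarith [norm_add_le u v, norm_nonneg (u + v), hS u hu, hS v hv]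
  have hε : 0 ≤ ε := (abs_nonneg _).trans (hdiag u hu)
  have hpol := two_mul_apply_eq_of_symm B hB u v
  have huu := abs_le.mp (hdiag u hu)
  have hvv := abs_le.mp (hdiag v hv)
  have huv := abs_le.mp (hsum u hu v hv)
  rw [abs_le]
  constructor <;> nlinarith

end Polarization

section IsometryDefect

variable {E F : Type*} [NormedAddCommGroup E] [InnerProductSpace ℝ E]
  [NormedAddCommGroup F] [InnerProductSpace ℝ F]

noncomputable def isometryDefect (T : E →L[ℝ] F) : E →L[ℝ] E →L[ℝ] ℝ :=
  (innerSL ℝ).bilinearComp T T - innerSL ℝ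

@[simp]
theorem isometryDefect_apply (T : E →L[ℝ] F) (u v : E) :
    T.isometryDefect u v = ⟪T u, T v⟫ - ⟪u, v⟫ := rfl

theorem isometryDefect_comm (T : E →L[ℝ] F) (u v : E) :
    T.isometryDefect u v = T.isometryDefect v u := by
  simp only [isometryDefect_apply, real_inner_comm]

theorem isometryDefect_self (T : E →L[ℝ] F) (u : E) :
    T.isometryDefect u u = ‖T u‖ ^ 2 - ‖u‖ ^ 2 := by
  simp only [isometryDefect_apply, real_inner_self_eq_norm_sq]

theorem one_sub_sq_mul_abs_norm_sq_sub_one_le_of_net (T : E →L[ℝ] F) {N : Set E} {δ ε : ℝ}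
    (hδ : 0 ≤ δ) (hδ₁ : δ ≤ 1) (hN : ∀ y ∈ N, ‖y‖ = 1)
    (hnet : ∀ x, ‖x‖ = 1 → ∃ y ∈ N, ‖x - y‖ ≤ δ)
    (hsum : ∀ y ∈ N, ∀ y' ∈ N, |‖T (y + y')‖ ^ 2 - ‖y + y'‖ ^ 2| ≤ ε * ‖y + y'‖ ^ 2)
    {x : E} (hx : ‖x‖ = 1) : (1 - δ) ^ 2 * |‖T x‖ ^ 2 - 1| ≤ 3 * ε := by
  obtain ⟨y, hy, -⟩ := hnet x hx
  have hcross := T.isometryDefect.abs_apply_le_of_forall_abs_apply_add_le T.isometryDefect_comm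
    hN (by simpa only [isometryDefect_self] using hsum)
  have hε : 0 ≤ ε := by linarith [(abs_nonneg _).trans (hcross y hy y hy)]
  have hB := T.isometryDefect.one_sub_sq_mul_opNorm_le_of_net₂ hδ hδ₁ (by positivity) hnet hcross
  calc (1 - δ) ^ 2 * |‖T x‖ ^ 2 - 1| = (1 - δ) ^ 2 * ‖T.isometryDefect x x‖ := by
        rw [isometryDefect_self, hx, one_pow, Real.norm_eq_abs]
    _ ≤ (1 - δ) ^ 2 * (‖T.isometryDefect‖ * ‖x‖ * ‖x‖) := by
        gcongr; exact T.isometryDefect.le_opNorm₂ x x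
    _ ≤ 3 * ε := by rwa [hx, mul_one, mul_one]

end IsometryDefect

end ContinuousLinearMap

theorem stmt17 :
    ∃ C : ℝ, 0 < C ∧
      ∀ (m d : ℕ) (A : Matrix (Fin m) (Fin d) ℝ)
        (V : Submodule ℝ (EuclideanSpace ℝ (Fin d)))
        (N : Set (EuclideanSpace ℝ (Fin d))) (ε : ℝ), 0 < ε → ε < 1 →
        (∀ x ∈ N, x ∈ V ∧ ‖x‖ = 1) →
        (∀ x ∈ V, ‖x‖ = 1 → ∃ y ∈ N, ‖x - y‖ ≤ 1 / 2) →
        (∀ v ∈ {z : EuclideanSpace ℝ (Fin d) |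
            ∃ a ∈ N ∪ {0}, ∃ b ∈ N ∪ {0}, z = a + b},
          |‖Matrix.toEuclideanLin A v‖ ^ 2 - ‖v‖ ^ 2| ≤ ε * ‖v‖ ^ 2) →
        ∀ x ∈ V, ‖x‖ = 1 → |‖Matrix.toEuclideanLin A x‖ ^ 2 - 1| ≤ C * ε := by
  refine ⟨12, by norm_num, ?_⟩
  intro m d A V N ε _ _ hN hnet hplus x hxV hx
  let T := LinearMap.toContinuousLinearMap (Matrix.toEuclideanLin A) ∘L V.subtypeL
  have hnetV : ∀ x : V, ‖x‖ = 1 → ∃ y ∈ Subtype.val ⁻¹' N, ‖x - y‖ ≤ 1 / 2 := fun x hx ↦ by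
    obtain ⟨y, hy, hxy⟩ := hnet x x.2 hx
    exact ⟨⟨y, (hN y hy).1⟩, hy, hxy⟩
  have key := T.one_sub_sq_mul_abs_norm_sq_sub_one_le_of_net (x := ⟨x, hxV⟩) (by norm_num)
    (by norm_num) (fun y hy ↦ (hN y hy).2) hnetV
    (fun y hy y' hy' ↦ hplus _ ⟨y, .inl hy, y', .inl hy', rfl⟩) hx
  have hTx : ‖T ⟨x, hxV⟩‖ = ‖Matrix.toEuclideanLin A x‖ := rfl
  rw [hTx] at key
  linarith
end
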